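/- Fix Ā ∈ ℝ^{3×3} and let H̃(A) = (1/2) |A − Ā|². If λ, μ ∈ ℝ^{3×3} satisfy |λ| > 3/2, then g_{H̃}(λ, μ) = +∞. -/

import Mathlib

/-!
`T` is homogeneous of degree two (`T(A) = 2 cof A`), so along a ray `t ↦ t B` the objective
`A : μ + λ : T(A) - |A - Ā|² / 2` is the quadratic
`(λ : T(B) - |B|² / 2) t² + (B : μ + B : Ā) t - |Ā|² / 2`, which is unbounded as soon as
`λ : T(B) > |B|² / 2`. If `|λ| > 3/2`, some entry has `λᵢⱼ² > |λ|² / 9 > 1/4`; the matrix `B`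
with entries `1` at `(i+1, j+1)` and `2 λᵢⱼ` at `(i+2, j+2)` has `cof B = 2 λᵢⱼ eᵢⱼ`, hence
`λ : T(B) = 4 λᵢⱼ² > (1 + 4 λᵢⱼ²) / 2 = |B|² / 2`.
-/

open scoped BigOperators

noncomputable section

/-- `3 × 3` real matrices, as functions of (row, column). -/
abbrev M33 := Fin 3 → Fin 3 → ℝ

/-- The Levi-Civita symbol on indices in `Fin 3`. -/
def eps (i j k : Fin 3) : ℝ :=
  ((i.val : ℝ) - j.val) * ((j.val : ℝ) - k.val) * ((k.val : ℝ) - i.val) / 2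

/-- The contraction `X : Y = Σ_{i,j} X_{ij} Y_{ij}`. -/
def dotM (X Y : M33) : ℝ := ∑ i, ∑ j, X i j * Y i j

/-- `T(A)_{Zp} = ε_{pqr} ε_{ZBC} A_{Bq} A_{Cr}`. -/
def Tmap (A : M33) : M33 :=
  fun Z p => ∑ q, ∑ r, ∑ B, ∑ C, eps p q r * eps Z B C * A B q * A C r

/-- The Frobenius norm on `M33`. -/
def fnorm (A : M33) : ℝ := Real.sqrt (∑ i, ∑ j, (A i j) ^ 2)

/-- `g_H(λ, μ) = sup_{A} ( A:μ + λ:T(A) − H(A) )`, valued in `ℝ ∪ {±∞}` (the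
supremum is never `-∞` since `H` is real-valued). -/
def gH (H : M33 → ℝ) (lam mu : M33) : EReal :=
  ⨆ A : M33, ((dotM A mu + dotM lam (Tmap A) - H A : ℝ) : EReal)

open Filter Finset

/-- Indices in `Fin 3` wrap around, so this is the cofactor matrix with no signs needed. -/
def cof (A : M33) : M33 := fun i j =>
  A (i + 1) (j + 1) * A (i + 2) (j + 2) - A (i + 1) (j + 2) * A (i + 2) (j + 1)

lemma Tmap_eq_two_smul_cof (A : M33) : Tmap A = (2 : ℝ) • cof A := by
  ext Z p
  fin_cases Z <;> fin_cases p <;>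
    simp [Tmap, cof, eps, Fin.sum_univ_three] <;> ring

lemma Tmap_smul (t : ℝ) (A : M33) : Tmap (t • A) = t ^ 2 • Tmap A := by
  ext Z p
  simp only [Tmap, Pi.smul_apply, smul_eq_mul, Fin.sum_univ_three]
  ring

lemma fnorm_sq (A : M33) : fnorm A ^ 2 = dotM A A := by
  rw [fnorm, Real.sq_sqrt (by positivity), dotM]
  simp only [sq]

lemma exists_sq_lt_of_nine_mul_lt {lam : M33} {c : ℝ} (h : 9 * c < fnorm lam ^ 2) :
    ∃ i j, c < lam i j ^ 2 := by
  rw [fnorm, Real.sq_sqrt (by positivity)] at h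
  obtain ⟨i, -, hi⟩ := exists_lt_of_sum_lt (s := univ) (f := fun _ => 3 * c)
    (g := fun i => ∑ j, lam i j ^ 2) (by
      simp only [sum_const, card_univ, Fintype.card_fin, nsmul_eq_mul, Nat.cast_ofNat]
      linarith)
  obtain ⟨j, -, hj⟩ := exists_lt_of_sum_lt (s := univ) (f := fun _ => c)
    (g := fun j => lam i j ^ 2) (by
      simp only [sum_const, card_univ, Fintype.card_fin, nsmul_eq_mul, Nat.cast_ofNat]
      linarith)
  exact ⟨i, j, hj⟩

lemma tendsto_quadratic_atTop {a : ℝ} (ha : 0 < a) (b c : ℝ) :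
    Tendsto (fun t : ℝ => a * t ^ 2 + b * t + c) atTop atTop := by
  have hlin : Tendsto (fun t : ℝ => a * t + b) atTop atTop :=
    tendsto_atTop_add_const_right _ b (tendsto_id.const_mul_atTop ha)
  refine tendsto_atTop_add_const_right _ c ((tendsto_id.atTop_mul_atTop₀ hlin).congr fun t => ?_)
  simp only [id]; ring

lemma EReal.iSup_coe_eq_top_of_tendsto {α : Type*} {l : Filter α} [l.NeBot] {f : α → ℝ}
    (hf : Tendsto f l atTop) : ⨆ x, (f x : EReal) = ⊤ := by
  refine iSup_eq_top.2 fun b hb => ?_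
  obtain ⟨M, hbM, -⟩ := EReal.lt_iff_exists_real_btwn.1 hb
  obtain ⟨x, hx⟩ := (hf.eventually_gt_atTop M).exists
  exact ⟨x, hbM.trans (EReal.coe_lt_coe_iff.2 hx)⟩

def testMatrix (i j : Fin 3) (s : ℝ) : M33 := fun k l =>
  if k = i + 1 ∧ l = j + 1 then 1 else if k = i + 2 ∧ l = j + 2 then s else 0

lemma cof_testMatrix (i j : Fin 3) (s : ℝ) :
    cof (testMatrix i j s) = fun k l => if k = i ∧ l = j then s else 0 := by
  ext k l
  fin_cases i <;> fin_cases j <;> fin_cases k <;> fin_cases l <;> simp [cof, testMatrix]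

lemma dotM_Tmap_testMatrix (lam : M33) (i j : Fin 3) (s : ℝ) :
    dotM lam (Tmap (testMatrix i j s)) = 2 * s * lam i j := by
  simp only [dotM, Tmap_eq_two_smul_cof, cof_testMatrix, ite_and, Pi.smul_apply, smul_eq_mul,
    mul_ite, mul_zero, sum_ite_irrel, sum_ite_eq', mem_univ, if_true, sum_const_zero]
  ring

lemma fnorm_testMatrix_sq (i j : Fin 3) (s : ℝ) : fnorm (testMatrix i j s) ^ 2 = 1 + s ^ 2 := by
  rw [fnorm_sq]
  fin_cases i <;> fin_cases j <;> simp [dotM, testMatrix, Fin.sum_univ_three] <;> ring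

lemma exists_half_fnorm_sq_lt_dotM_Tmap {lam : M33} (hlam : 3 / 2 < fnorm lam) :
    ∃ B, fnorm B ^ 2 / 2 < dotM lam (Tmap B) := by
  obtain ⟨i, j, hij⟩ := exists_sq_lt_of_nine_mul_lt (c := 1 / 4) (lam := lam) (by nlinarith)
  -- `s = 2 λᵢⱼ` minimises `(1 + s²) / 2 - 2 s λᵢⱼ`; the minimum `1 / 2 - 2 λᵢⱼ²` is negative.
  refine ⟨testMatrix i j (2 * lam i j), ?_⟩
  rw [fnorm_testMatrix_sq, dotM_Tmap_testMatrix]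
  linarith

lemma objective_smul (Abar lam mu B : M33) (t : ℝ) :
    dotM (t • B) mu + dotM lam (Tmap (t • B)) - 1 / 2 * fnorm (t • B - Abar) ^ 2 =
      (dotM lam (Tmap B) - fnorm B ^ 2 / 2) * t ^ 2 + (dotM B mu + dotM B Abar) * t
        - fnorm Abar ^ 2 / 2 := by
  simp only [Tmap_smul, fnorm_sq, dotM, Pi.smul_apply, Pi.sub_apply, smul_eq_mul,
    Fin.sum_univ_three]
  ring

lemma gH_eq_top_of_half_fnorm_sq_lt_dotM_Tmap {Abar lam mu B : M33}
    (hB : fnorm B ^ 2 / 2 < dotM lam (Tmap B)) :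
    gH (fun A => (1 / 2) * fnorm (A - Abar) ^ 2) lam mu = ⊤ := by
  have hray := EReal.iSup_coe_eq_top_of_tendsto
    (tendsto_quadratic_atTop (sub_pos.2 hB) (dotM B mu + dotM B Abar) (-(fnorm Abar ^ 2 / 2)))
  refine top_unique (hray.symm.le.trans (iSup_le fun t => ?_))
  rw [← sub_eq_add_neg, ← objective_smul, gH]
  exact le_iSup_of_le (t • B) le_rfl

theorem stmt11 (Abar : M33) (lam mu : M33) (hlam : 3 / 2 < fnorm lam) :
    gH (fun A => (1 / 2) * fnorm (A - Abar) ^ 2) lam mu = ⊤ := by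
  obtain ⟨B, hB⟩ := exists_half_fnorm_sq_lt_dotM_Tmap hlam
  exact gH_eq_top_of_half_fnorm_sq_lt_dotM_Tmap hB
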